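/- Let K ⊂ ℂ be compact, non-polar and polynomially convex, and let Ω = ℂ \ K with Green's function g_Ω with pole at infinity. If a sequence of polynomials (q_k) of degrees n_k → ∞ is K-regular, then the sequence of derivatives (q_k') is also K-regular. -/

import Mathlib

open MeasureTheory Metric Filter Polynomial Topology Asymptotics
open scoped Classical ENNReal

/-- Logarithmic potential of a measure, `p_μ(z) = ∫ log|z-w| dμ(w)`. -/
noncomputable def logPotential (μ : Measure ℂ) (z : ℂ) : ℝ :=
  ∫ w, Real.log ‖z - w‖ ∂μ

/-- Logarithmic energy `I(μ) = ∫ p_μ dμ`. -/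
noncomputable def logEnergy (μ : Measure ℂ) : ℝ :=
  ∫ z, logPotential μ z ∂μ

/-- A compact set is non-polar if it carries a probability measure of finite logarithmic
energy (equivalently, positive logarithmic capacity). -/
def NonPolar (K : Set ℂ) : Prop :=
  ∃ μ : Measure ℂ, IsProbabilityMeasure μ ∧ μ Kᶜ = 0 ∧
    Integrable (fun p : ℂ × ℂ => Real.log ‖p.1 - p.2‖) (μ.prod μ)

/-- `ω` is the equilibrium measure of `K`: a probability measure supported on `K`,
of finite energy, maximizing the logarithmic energy (Ransford's sign convention). -/
structure IsEquilibriumMeasure (K : Set ℂ) (ω : Measure ℂ) : Prop where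
  prob : IsProbabilityMeasure ω
  supp : ω Kᶜ = 0
  finite_energy :
    Integrable (fun p : ℂ × ℂ => Real.log ‖p.1 - p.2‖) (ω.prod ω)
  maximal : ∀ ν : Measure ℂ, IsProbabilityMeasure ν → ν Kᶜ = 0 →
    Integrable (fun p : ℂ × ℂ => Real.log ‖p.1 - p.2‖) (ν.prod ν) →
    logEnergy ν ≤ logEnergy ω

/-- Green's function of `Ω = ℂ \ K` with pole at infinity, `g_Ω = p_ω − I(ω)`,
where `ω` is the equilibrium measure of `K`. -/
noncomputable def greenFn (ω : Measure ℂ) (z : ℂ) : ℝ :=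
  logPotential ω z - logEnergy ω

/-- Root distribution of a polynomial: average of Dirac masses at its roots
with multiplicity. -/
noncomputable def rootDist (q : Polynomial ℂ) : Measure ℂ :=
  ((q.natDegree : ℝ≥0∞))⁻¹ • (q.roots.map Measure.dirac).sum

/-- `K`-regularity of a sequence of polynomials: `(1/n_k) log|q_k| → g`
uniformly outside some disk. -/
def KRegular (q : ℕ → Polynomial ℂ) (g : ℂ → ℝ) : Prop :=
  ∃ R > (0:ℝ), TendstoUniformlyOn
    (fun k z => ((q k).natDegree : ℝ)⁻¹ * Real.log ‖(q k).eval z‖)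
    g atTop (closedBall (0:ℂ) R)ᶜ

/-- The sequence `(q_k)` centers on the compact set `C`. -/
def Centers (q : ℕ → Polynomial ℂ) (C : Set ℂ) : Prop :=
  ∃ N : ℕ,
    (∃ R > (0:ℝ), ∀ k ≥ N, ∀ z : ℂ, (q k).IsRoot z → z ∈ ball (0:ℂ) R) ∧
    (∀ L : Set ℂ, IsClosed L → Disjoint L C →
      ∃ M : ℕ, 0 < M ∧ ∀ k ≥ N, (((q k).roots).filter (· ∈ L)).card ≤ M)

/-- The sequence `(q_k)` weakly centers on the compact set `C`. -/
def WeaklyCenters (q : ℕ → Polynomial ℂ) (C : Set ℂ) : Prop :=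
  (∃ N : ℕ, ∃ R > (0:ℝ), ∀ k ≥ N, ∀ z : ℂ, (q k).IsRoot z → z ∈ ball (0:ℂ) R) ∧
  (∀ L : Set ℂ, IsClosed L → Disjoint L C →
    Tendsto (fun k => rootDist (q k) L) atTop (nhds 0))

/-- Weak-star convergence of measures, tested against bounded continuous functions. -/
def WeakStarTendsto (μ : ℕ → Measure ℂ) (ν : Measure ℂ) : Prop :=
  ∀ f : BoundedContinuousFunction ℂ ℝ,
    Tendsto (fun k => ∫ z, f z ∂(μ k)) atTop (nhds (∫ z, f z ∂ν))

/-! Near infinity, `q'(z)/q(z) = ∑ᵣ (z - r)⁻¹ ≈ n/z` as soon as all roots `r` of `q` lie in a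
fixed disc, so `log |q'(z)| = log |q(z)| + log n - log |z| + O(1)`. Since `g_Ω(z) = log |z| + O(1)`
near infinity, dividing by `n - 1` instead of `n` only costs `O(log n / n)`, uniformly in `z`.
The roots do stay in a fixed disc: `g_Ω ≥ 1` near infinity, whereas `(1/n) log |q|` vanishes at a
root (Lean's `log 0 = 0` standing in for `-∞`). -/

namespace Polynomial

variable {F : Type*} [Field F]

lemma eval_derivative_multiset_prod_X_sub_C {s : Multiset F} {z : F} (hz : z ∉ s) :
    (derivative (s.map fun r => X - C r).prod).eval z
      = (s.map fun r => X - C r).prod.eval z * (s.map fun r => (z - r)⁻¹).sum := by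
  induction s using Multiset.induction with
  | empty => simp
  | cons a t ih =>
    have ha : z - a ≠ 0 := sub_ne_zero.mpr fun h => hz (h ▸ Multiset.mem_cons_self a t)
    simp only [Multiset.map_cons, Multiset.prod_cons, Multiset.sum_cons, derivative_mul,
      eval_add, eval_mul, eval_sub, eval_X, eval_C, derivative_sub, derivative_X, derivative_C,
      sub_zero, eval_one, ih fun h => hz (Multiset.mem_cons_of_mem h)]
    field_simp

lemma eval_derivative_eq_eval_mul_sum_inv {p : F[X]} (hroots : p.roots.card = p.natDegree)
    {z : F} (hz : ¬ p.IsRoot z) :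
    (derivative p).eval z = p.eval z * (p.roots.map fun r => (z - r)⁻¹).sum := by
  have hz' : z ∉ p.roots := fun h => hz (isRoot_of_mem_roots h)
  -- freeze `p.roots`, so that the rewrite below only unfolds the other occurrences of `p`
  set s := p.roots
  rw [← C_leadingCoeff_mul_prod_multiset_X_sub_C hroots, derivative_C_mul, eval_mul, eval_mul,
    eval_C, eval_derivative_multiset_prod_X_sub_C hz', mul_assoc]

end Polynomial

open Real

lemma abs_log_norm_sub_log_norm_le_log_two {E : Type*} [SeminormedAddCommGroup E] {x y : E}
    (hy : 0 < ‖y‖) (h : ‖x - y‖ ≤ ‖y‖ / 2) : |log ‖x‖ - log ‖y‖| ≤ log 2 := by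
  have hlow : ‖y‖ / 2 ≤ ‖x‖ := by linarith [norm_sub_norm_le y x, norm_sub_rev x y]
  have hup : ‖x‖ ≤ 2 * ‖y‖ := by linarith [norm_sub_norm_le x y]
  have h₁ := log_le_log (by positivity) hlow
  have h₂ := log_le_log (by linarith) hup
  rw [log_div hy.ne' two_ne_zero] at h₁
  rw [log_mul two_ne_zero hy.ne'] at h₂
  rw [abs_le]
  constructor <;> linarith

lemma norm_mul_sum_inv_sub_sub_card_le {𝕜 : Type*} [NormedField 𝕜] {s : Multiset 𝕜} {R : ℝ}
    (hs : ∀ r ∈ s, ‖r‖ ≤ R) {z : 𝕜} (hz : 3 * R < ‖z‖) :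
    ‖z * (s.map fun r => (z - r)⁻¹).sum - s.card‖ ≤ s.card / 2 := by
  induction s using Multiset.induction with
  | empty => simp
  | cons a t ih =>
    have ha := hs a (Multiset.mem_cons_self a t)
    have hza : 2 * ‖a‖ < ‖z - a‖ := by linarith [norm_sub_norm_le z a, norm_nonneg a]
    have hterm : ‖z * (z - a)⁻¹ - 1‖ ≤ 1 / 2 := by
      have hne : z - a ≠ 0 := norm_pos_iff.mp (by linarith [norm_nonneg a])
      rw [show z * (z - a)⁻¹ - 1 = a / (z - a) by field_simp; ring, norm_div,
        div_le_iff₀ (by linarith [norm_nonneg a])]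
      linarith
    calc ‖z * ((a ::ₘ t).map fun r => (z - r)⁻¹).sum - (a ::ₘ t).card‖
        = ‖(z * (z - a)⁻¹ - 1) + (z * (t.map fun r => (z - r)⁻¹).sum - t.card)‖ := by
          simp only [Multiset.map_cons, Multiset.sum_cons, Multiset.card_cons]
          push_cast
          ring_nf
      _ ≤ 1 / 2 + t.card / 2 :=
          (norm_add_le _ _).trans
            (add_le_add hterm (ih fun r hr => hs r (Multiset.mem_cons_of_mem hr)))
      _ = (a ::ₘ t).card / 2 := by
          rw [Multiset.card_cons]
          push_cast
          ring

lemma abs_logPotential_sub_log_norm_le (ω : Measure ℂ) [IsProbabilityMeasure ω] {R : ℝ}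
    (hω : ∀ᵐ w ∂ω, ‖w‖ ≤ R) {z : ℂ} (hz : 0 < ‖z‖) (hR : 2 * R ≤ ‖z‖) :
    |logPotential ω z - log ‖z‖| ≤ log 2 := by
  have hbound : ∀ᵐ w ∂ω, ‖log ‖z - w‖ - log ‖z‖‖ ≤ log 2 := by
    filter_upwards [hω] with w hw
    rw [Real.norm_eq_abs]
    exact abs_log_norm_sub_log_norm_le_log_two hz
      (by rw [sub_sub_cancel_left, norm_neg]; linarith)
  have hint : Integrable (fun w => log ‖z - w‖ - log ‖z‖) ω :=
    .of_bound (Measurable.aestronglyMeasurable (by fun_prop)) _ hbound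
  have hint' : Integrable (fun w => log ‖z - w‖) ω :=
    (integrable_add_const_iff (c := -log ‖z‖)).mp (by simpa only [← sub_eq_add_neg] using hint)
  have hsub : logPotential ω z - log ‖z‖ = ∫ w, (log ‖z - w‖ - log ‖z‖) ∂ω := by
    rw [integral_sub hint' (integrable_const _), integral_const, logPotential]
    simp
  rw [hsub, ← Real.norm_eq_abs]
  simpa using norm_integral_le_of_norm_le_const hbound

lemma abs_greenFn_sub_log_norm_le (ω : Measure ℂ) [IsProbabilityMeasure ω] {R : ℝ}
    (hω : ∀ᵐ w ∂ω, ‖w‖ ≤ R) {z : ℂ} (hz : 0 < ‖z‖) (hR : 2 * R ≤ ‖z‖) :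
    |greenFn ω z - log ‖z‖| ≤ log 2 + |logEnergy ω| := by
  have h := abs_logPotential_sub_log_norm_le ω hω hz hR
  calc |greenFn ω z - log ‖z‖| = |(logPotential ω z - log ‖z‖) - logEnergy ω| := by
        rw [greenFn]; ring_nf
    _ ≤ log 2 + |logEnergy ω| := (abs_sub _ _).trans (by linarith)

lemma eventually_roots_notMem_of_tendstoUniformlyOn {𝕜 ι : Type*} [NormedField 𝕜]
    {l : Filter ι} {q : ι → 𝕜[X]} {g : 𝕜 → ℝ} {s : Set 𝕜}
    (hu : TendstoUniformlyOn (fun k z => ((q k).natDegree : ℝ)⁻¹ * log ‖(q k).eval z‖) g l s)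
    {c : ℝ} (hc : 0 < c) (hg : ∀ z ∈ s, c ≤ g z) :
    ∀ᶠ k in l, ∀ r ∈ (q k).roots, r ∉ s := by
  filter_upwards [Metric.tendstoUniformlyOn_iff.mp hu c hc] with k hk r hr hrs
  have hdist := hk r hrs
  rw [(mem_roots'.mp hr).2, norm_zero, log_zero, mul_zero, Real.dist_eq, sub_zero] at hdist
  linarith [le_abs_self (g r), hg r hrs]

lemma TendstoUniformlyOn.of_abs_sub_le {ι α : Type*} {l : Filter ι} {F G : ι → α → ℝ}
    {g : α → ℝ} {s : Set α} {ε : ι → ℝ} (hG : TendstoUniformlyOn G g l s)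
    (hε : Tendsto ε l (𝓝 0)) (c : ℝ)
    (h : ∀ᶠ i in l, ∀ x ∈ s, |F i x - g x| ≤ c * |G i x - g x| + ε i) :
    TendstoUniformlyOn F g l s := by
  rw [Metric.tendstoUniformlyOn_iff] at hG ⊢
  intro δ hδ
  have hc : 0 < |c| + 1 := by positivity
  filter_upwards [h, hG (δ / 2 / (|c| + 1)) (by positivity),
    hε.eventually (gt_mem_nhds (half_pos hδ))] with i hi hGi hεi x hx
  have hGx := (lt_div_iff₀' hc).mp (hGi x hx)
  rw [Real.dist_eq, abs_sub_comm] at hGx ⊢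
  have hcG : c * |G i x - g x| ≤ (|c| + 1) * |G i x - g x| :=
    mul_le_mul_of_nonneg_right (by linarith [le_abs_self c]) (abs_nonneg _)
  linarith [hi x hx]

lemma tendsto_const_add_log_div_atTop (c : ℝ) :
    Tendsto (fun x : ℝ => (c + log x) / x) atTop (𝓝 0) := by
  have hlog : Tendsto (fun x : ℝ => log x / x) atTop (𝓝 0) := by
    simpa using tendsto_pow_log_div_mul_add_atTop 1 0 1 one_ne_zero
  simpa [add_div] using (tendsto_const_nhds.div_atTop tendsto_id).add hlog

lemma abs_log_norm_eval_derivative_sub_log_norm_eval_le {p : ℂ[X]} (hp : 0 < p.natDegree)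
    {R : ℝ} (hroots : ∀ r ∈ p.roots, ‖r‖ ≤ R) {z : ℂ} (hz : 3 * R < ‖z‖) :
    |log ‖(derivative p).eval z‖ - log ‖p.eval z‖ - log p.natDegree + log ‖z‖| ≤ log 2 := by
  set n := p.natDegree
  have hcard : p.roots.card = n := splits_iff_card_roots.mp (IsAlgClosed.splits p)
  have hzroot : ¬ p.IsRoot z := fun h => by
    have hp0 : p ≠ 0 := ne_zero_of_natDegree_gt hp
    linarith [hroots z ((mem_roots hp0).mpr h), norm_nonneg z]
  set S := (p.roots.map fun r => (z - r)⁻¹).sum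
  have hzS : ‖z * S - n‖ ≤ ‖(n : ℂ)‖ / 2 := by
    simpa [hcard] using norm_mul_sum_inv_sub_sub_card_le hroots hz
  have hzS0 : z * S ≠ 0 := by
    intro h
    rw [h, zero_sub, norm_neg, Complex.norm_natCast] at hzS
    linarith [(Nat.cast_pos (α := ℝ)).mpr hp]
  have hlog : log ‖(derivative p).eval z‖ = log ‖p.eval z‖ + log ‖z * S‖ - log ‖z‖ := by
    rw [eval_derivative_eq_eval_mul_sum_inv hcard hzroot, norm_mul, norm_mul,
      log_mul (norm_ne_zero_iff.mpr hzroot) (norm_ne_zero_iff.mpr (right_ne_zero_of_mul hzS0)),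
      log_mul (norm_ne_zero_iff.mpr (left_ne_zero_of_mul hzS0))
        (norm_ne_zero_iff.mpr (right_ne_zero_of_mul hzS0))]
    ring
  rw [hlog, show ∀ a b c d : ℝ, a + b - c - a - d + c = b - d by intros; ring]
  simpa using abs_log_norm_sub_log_norm_le_log_two (by simpa using hp) hzS

lemma abs_log_norm_eval_derivative_sub_le {p : ℂ[X]} (hp : 2 ≤ p.natDegree) {R : ℝ}
    (hroots : ∀ r ∈ p.roots, ‖r‖ ≤ R) {z : ℂ} (hz : 3 * R < ‖z‖) {g C : ℝ}
    (hg : |g - log ‖z‖| ≤ C) :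
    |((derivative p).natDegree : ℝ)⁻¹ * log ‖(derivative p).eval z‖ - g|
      ≤ 2 * |(p.natDegree : ℝ)⁻¹ * log ‖p.eval z‖ - g|
        + 2 * ((C + log 2 + log p.natDegree) / p.natDegree) := by
  have hd := abs_log_norm_eval_derivative_sub_log_norm_eval_le (by omega) hroots hz
  set n := p.natDegree
  set d := log ‖(derivative p).eval z‖ - log ‖p.eval z‖ - log n + log ‖z‖
  set a := (n : ℝ)⁻¹ * log ‖p.eval z‖ - g
  set B := C + log 2 + log n
  have hn : (2 : ℝ) ≤ n := by exact_mod_cast hp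
  have hn1 : (0 : ℝ) < n - 1 := by linarith
  have hB : |(g - log ‖z‖) + d + log n| ≤ B :=
    (abs_add_three _ _ _).trans (by
      rw [abs_of_nonneg (log_nonneg (by linarith))]
      linarith)
  have hB0 : 0 ≤ B := (abs_nonneg _).trans hB
  have hsplit : ((n - 1 : ℕ) : ℝ)⁻¹ * log ‖(derivative p).eval z‖ - g
      = n / (n - 1) * a + ((g - log ‖z‖) + d + log n) / (n - 1) := by
    rw [Nat.cast_sub (by omega), Nat.cast_one]
    have : (n : ℝ) ≠ 0 := by positivity
    have : (n : ℝ) - 1 ≠ 0 := hn1.ne'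
    simp only [a, d]
    field_simp
    ring
  rw [natDegree_derivative, hsplit]
  calc |n / (n - 1) * a + ((g - log ‖z‖) + d + log n) / (n - 1)|
      ≤ n / (n - 1) * |a| + B / (n - 1) := by
        refine (abs_add_le _ _).trans (add_le_add ?_ ?_)
        · rw [abs_mul, abs_of_pos (by positivity)]
        · rw [abs_div, abs_of_pos hn1]
          exact div_le_div_of_nonneg_right hB hn1.le
    _ ≤ 2 * |a| + 2 * (B / n) := by
        gcongr
        · rw [div_le_iff₀ hn1]; linarith
        · rw [div_le_iff₀ hn1, mul_div_assoc', div_mul_eq_mul_div, le_div_iff₀ (by positivity)]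
          nlinarith

lemma exists_radius_greenFn_near_infinity (ω : Measure ℂ) [IsProbabilityMeasure ω] {R₀ : ℝ}
    (hω : ∀ᵐ w ∂ω, ‖w‖ ≤ R₀) (R₁ : ℝ) :
    ∃ R ≥ max R₁ 1, ∀ z : ℂ, R < ‖z‖ →
      |greenFn ω z - log ‖z‖| ≤ log 2 + |logEnergy ω| ∧ 1 ≤ greenFn ω z := by
  set C := log 2 + |logEnergy ω|
  refine ⟨max (max R₁ 1) (max (2 * R₀) (exp (C + 1))), le_max_left _ _, fun z hz => ?_⟩
  simp only [max_lt_iff] at hz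
  have hgreen := abs_greenFn_sub_log_norm_le ω hω (by linarith) hz.2.1.le
  have hlogz : C + 1 ≤ log ‖z‖ := by
    rw [← log_exp (C + 1)]
    exact log_le_log (exp_pos _) hz.2.2.le
  exact ⟨hgreen, by linarith [neg_abs_le (greenFn ω z - log ‖z‖)]⟩

theorem stmt_3_general (K : Set ℂ) (hK : IsCompact K) (ω : Measure ℂ) (hω : IsEquilibriumMeasure K ω)
    (q : ℕ → Polynomial ℂ)
    (hdeg : Tendsto (fun k => (q k).natDegree) atTop atTop)
    (h : KRegular q (greenFn ω)) :
    KRegular (fun k => Polynomial.derivative (q k)) (greenFn ω) := by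
  obtain ⟨R₁, -, hu⟩ := h
  have := hω.prob
  obtain ⟨R₀, hKR₀⟩ := hK.isBounded.subset_closedBall 0
  have hωR₀ : ∀ᵐ w ∂ω, ‖w‖ ≤ R₀ :=
    measure_mono_null (fun w hw => fun hwK => hw (by simpa using hKR₀ hwK)) hω.supp
  obtain ⟨R, hR, hgreen⟩ := exists_radius_greenFn_near_infinity ω hωR₀ R₁
  simp only [ge_iff_le, max_le_iff] at hR
  have huR : ∀ R' ≥ R, TendstoUniformlyOn
      (fun k z => ((q k).natDegree : ℝ)⁻¹ * log ‖(q k).eval z‖) (greenFn ω) atTop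
      (closedBall 0 R')ᶜ := fun R' hR' =>
    hu.mono (Set.compl_subset_compl.mpr (closedBall_subset_closedBall (by linarith)))
  have hroots : ∀ᶠ k in atTop, ∀ r ∈ (q k).roots, ‖r‖ ≤ R :=
    (eventually_roots_notMem_of_tendstoUniformlyOn (huR R le_rfl) one_pos
      fun z hz => (hgreen z (by simpa using hz)).2).mono fun k hk r hr => by simpa using hk r hr
  refine ⟨3 * R, by linarith, (huR (3 * R) (by linarith)).of_abs_sub_le
    (by simpa using ((tendsto_const_add_log_div_atTop (log 2 + |logEnergy ω| + log 2)).comp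
      (tendsto_natCast_atTop_atTop.comp hdeg)).const_mul 2) 2 ?_⟩
  filter_upwards [hroots, hdeg.eventually_ge_atTop 2] with k hk hn z hz
  simp only [Set.mem_compl_iff, mem_closedBall_zero_iff, not_le] at hz
  exact abs_log_norm_eval_derivative_sub_le hn hk hz (hgreen z (by linarith)).1

theorem stmt_3 (K : Set ℂ) (hK : IsCompact K) (hnp : NonPolar K)
    (hpc : IsConnected Kᶜ) (ω : Measure ℂ) (hω : IsEquilibriumMeasure K ω)
    (q : ℕ → Polynomial ℂ)
    (hdeg : Tendsto (fun k => (q k).natDegree) atTop atTop)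
    (h : KRegular q (greenFn ω)) :
    KRegular (fun k => Polynomial.derivative (q k)) (greenFn ω) :=
  stmt_3_general K hK ω hω q hdeg h
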